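/- arXiv:2011.06987 — 3 statements merged into one kernel-verified Lean document; each statement's English description precedes it below -/
import Mathlib

section
/- Let r ≥ 2 and ε ∈ (0, π]. Then for every φ ∈ [0, π], ∑_{ν ∈ ℤ, ν ≠ 0} (1 + |(φ + 2πν)/ε|^r)^{-1} ≤ 12 (1 + (φ/ε)^r)^{-1}. -/
/-!
For `ν ≠ 0` the shifted point stays far from the origin: `|φ + 2πν| ≥ π|ν|` because `φ ≤ π`.
Since `ε ≤ π`, this gives `|(φ + 2πν)/ε| ≥ (π/ε)|ν|` with `π/ε ≥ max 1 (φ/ε)`, and hence, for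
`r ≥ 2`, the `ν`-th term is at most `2 ν⁻² (1 + (φ/ε)^r)⁻¹`. Summing, `∑_{ν ≠ 0} ν⁻² = π²/3`
and `2π²/3 < 12`.
-/

open Real

theorem hasSum_int_inv_sq : HasSum (fun n : ℤ => ((n : ℝ) ^ 2)⁻¹) (π ^ 2 / 3) := by
  have hnat : HasSum (fun n : ℕ => (((n : ℤ) : ℝ) ^ 2)⁻¹) (π ^ 2 / 6) := by
    simpa only [one_div, Int.cast_natCast] using hasSum_zeta_two
  have hneg : HasSum (fun n : ℕ => (((-n : ℤ) : ℝ) ^ 2)⁻¹) (π ^ 2 / 6) := by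
    simpa only [Int.cast_neg, neg_sq] using hnat
  have h := HasSum.of_nat_of_neg (f := fun n : ℤ => ((n : ℝ) ^ 2)⁻¹) hnat hneg
  rw [Int.cast_zero, zero_pow two_ne_zero, inv_zero, sub_zero] at h
  rwa [show π ^ 2 / 3 = π ^ 2 / 6 + π ^ 2 / 6 by ring]

theorem pi_mul_abs_le_abs_add_two_pi_mul {φ : ℝ} (hφ : |φ| ≤ π) {n : ℤ} (hn : n ≠ 0) :
    π * |(n : ℝ)| ≤ |φ + 2 * π * n| := by
  have hn1 : (1 : ℝ) ≤ |(n : ℝ)| := by exact_mod_cast Int.one_le_abs hn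
  calc π * |(n : ℝ)| ≤ |2 * π * n| - |φ| := by
        rw [abs_mul, abs_of_pos two_pi_pos]; nlinarith [pi_pos]
    _ ≤ |φ + 2 * π * n| := by
        rw [add_comm]; exact abs_sub_abs_le_abs_add _ _

theorem sq_mul_one_add_pow_le {r : ℕ} (hr : 2 ≤ r) {M x y t : ℝ} (hM : 1 ≤ M) (hx : 0 ≤ x)
    (hxy : x ≤ y) (hy : 1 ≤ y) (hyt : y * M ≤ t) :
    M ^ 2 * (1 + x ^ r) ≤ 2 * (1 + t ^ r) := by
  have hxr : 1 + x ^ r ≤ 2 * y ^ r := by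
    have : 1 ≤ y ^ r := one_le_pow₀ hy
    have : x ^ r ≤ y ^ r := pow_le_pow_left₀ hx hxy r
    linarith
  calc M ^ 2 * (1 + x ^ r) ≤ M ^ r * (2 * y ^ r) :=
        mul_le_mul (pow_le_pow_right₀ hM hr) hxr (by positivity) (by positivity)
    _ = 2 * (y * M) ^ r := by ring
    _ ≤ 2 * t ^ r := by gcongr
    _ ≤ 2 * (1 + t ^ r) := by linarith

theorem inv_one_add_abs_shift_pow_le {r : ℕ} (hr : 2 ≤ r) {ε φ : ℝ} (hε0 : 0 < ε) (hεπ : ε ≤ π)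
    (hφ0 : 0 ≤ φ) (hφπ : φ ≤ π) {n : ℤ} (hn : n ≠ 0) :
    (1 + |(φ + 2 * π * n) / ε| ^ r)⁻¹ ≤ 2 * ((n : ℝ) ^ 2)⁻¹ * (1 + (φ / ε) ^ r)⁻¹ := by
  have hshift : π / ε * |(n : ℝ)| ≤ |(φ + 2 * π * n) / ε| := by
    rw [abs_div, abs_of_pos hε0, div_mul_eq_mul_div]
    gcongr
    exact pi_mul_abs_le_abs_add_two_pi_mul (by rwa [abs_of_nonneg hφ0]) hn
  have key := sq_mul_one_add_pow_le hr (by exact_mod_cast Int.one_le_abs hn)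
    (div_nonneg hφ0 hε0.le) (div_le_div_of_nonneg_right hφπ hε0.le)
    ((one_le_div₀ hε0).mpr hεπ) hshift
  rw [sq_abs] at key
  calc (1 + |(φ + 2 * π * n) / ε| ^ r)⁻¹ ≤ ((n : ℝ) ^ 2 * (1 + (φ / ε) ^ r) / 2)⁻¹ :=
        inv_anti₀ (by have : (n : ℝ) ≠ 0 := Int.cast_ne_zero.mpr hn; positivity) (by linarith)
    _ = 2 * ((n : ℝ) ^ 2)⁻¹ * (1 + (φ / ε) ^ r)⁻¹ := by
        rw [div_eq_mul_inv, mul_inv, mul_inv, inv_inv]; ring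

/-- The lattice sum over nonzero `ν` is dominated by `12` times the `ν = 0` term. -/
theorem lattice_sum_bound (r : ℕ) (hr : 2 ≤ r) (ε : ℝ) (hε : ε ∈ Set.Ioc (0 : ℝ) π)
    (φ : ℝ) (hφ : φ ∈ Set.Icc (0 : ℝ) π) :
    ∑' ν : {n : ℤ // n ≠ 0},
        (1 + |(φ + 2 * π * ((ν : ℤ) : ℝ)) / ε| ^ r)⁻¹ ≤
      12 * (1 + (φ / ε) ^ r)⁻¹ := by
  obtain ⟨hε0, hεπ⟩ := hε
  obtain ⟨hφ0, hφπ⟩ := hφ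
  set c := (1 + (φ / ε) ^ r)⁻¹
  have hdom : HasSum (fun n : ℤ => 2 * ((n : ℝ) ^ 2)⁻¹ * c) (2 * (π ^ 2 / 3) * c) :=
    (hasSum_int_inv_sq.mul_left 2).mul_right c
  have hbound (ν : {n : ℤ // n ≠ 0}) :=
    inv_one_add_abs_shift_pow_le hr hε0 hεπ hφ0 hφπ ν.2
  have hdom_ne_zero := hdom.summable.subtype {n | n ≠ 0}
  calc _ ≤ ∑' ν : {n : ℤ // n ≠ 0}, 2 * (((ν : ℤ) : ℝ) ^ 2)⁻¹ * c :=
        Summable.tsum_le_tsum hbound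
          (.of_nonneg_of_le (fun _ => by positivity) hbound hdom_ne_zero) hdom_ne_zero
    _ ≤ ∑' n : ℤ, 2 * ((n : ℝ) ^ 2)⁻¹ * c :=
        Summable.tsum_subtype_le _ {n | n ≠ 0} (fun _ => by positivity) hdom.summable
    _ = 2 * (π ^ 2 / 3) * c := hdom.tsum_eq
    _ ≤ 12 * c := by gcongr; nlinarith [pi_le_four, pi_pos]
end

section
/- Let r ∈ ℕ, β > 0, c > 0, and let (A_ℓ)_{ℓ≥0} be a nonnegative sequence such that the r-th forward differences Δ_ℓ^r of (√A_ℓ) satisfy |Δ_ℓ^r| ≤ c (1+ℓ)^{-(1+β+r)} for all ℓ ≥ 0, and √A_ℓ → 0 as ℓ → ∞. Then for each i = 0,…,r there exists C_i > 0 such that |Δ_ℓ^i| ≤ C_i (1+ℓ)^{-(1+β+i)} for all ℓ ≥ 0. -/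
/-!
If `g → 0` and `|g (ℓ + 1) - g ℓ| ≤ C (1 + ℓ)^{-(s+1)}`, then `g ℓ = -∑_{m ≥ ℓ} (g (m + 1) - g m)`,
and the mean value theorem for `t ↦ t^{-s}` compares the tail `∑_{m ≥ ℓ} (1 + m)^{-(s+1)}` with
`(1 + 1/s) (1 + ℓ)^{-s}`. Every forward difference of a null sequence is null, so applying this
to `g = Δ^i` with `s = 1 + β + i` descends from `i = r` to `i = 0`.
-/

open Real Filter

/-- Forward differences of a sequence. -/
def fwdDiffSeq (f : ℕ → ℝ) : ℕ → ℕ → ℝ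
  | 0 => f
  | (i + 1) => fun ℓ => fwdDiffSeq f i (ℓ + 1) - fwdDiffSeq f i ℓ

open Finset Topology

theorem rpow_neg_sub_rpow_neg_add_one_ge {s x : ℝ} (hs : 0 < s) (hx : 0 < x) :
    s * (x + 1) ^ (-(s + 1)) ≤ x ^ (-s) - (x + 1) ^ (-s) := by
  have hderiv : ∀ t : ℝ, 0 < t → HasDerivAt (fun t : ℝ => t ^ (-s)) (-s * t ^ (-s - 1)) t :=
    fun t ht => hasDerivAt_rpow_const (Or.inl ht.ne')
  obtain ⟨c, ⟨hxc, hcx⟩, hslope⟩ := exists_hasDerivAt_eq_slope (fun t : ℝ => t ^ (-s))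
    (fun t => -s * t ^ (-s - 1)) (lt_add_one x)
    (fun t ht => (hderiv t (hx.trans_le ht.1)).continuousAt.continuousWithinAt)
    (fun t ht => hderiv t (hx.trans ht.1))
  have hmono : (x + 1) ^ (-s - 1) ≤ c ^ (-s - 1) :=
    rpow_le_rpow_of_nonpos (hx.trans hxc) hcx.le (by linarith)
  rw [add_sub_cancel_left, div_one] at hslope
  rw [neg_add']
  nlinarith

theorem sum_range_one_add_rpow_neg_le {s : ℝ} (hs : 0 < s) (ℓ N : ℕ) :
    ∑ m ∈ range N, (1 + (ℓ + m : ℝ)) ^ (-(s + 1)) ≤ (1 + 1 / s) * (1 + ℓ) ^ (-s) := by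
  set g : ℕ → ℝ := fun m => (1 + (ℓ + m : ℝ)) ^ (-s) with hg
  have htail : ∀ m : ℕ, (1 + (ℓ + (m + 1 : ℕ) : ℝ)) ^ (-(s + 1)) ≤ (g m - g (m + 1)) / s := by
    intro m
    rw [le_div_iff₀' hs]
    have := rpow_neg_sub_rpow_neg_add_one_ge hs (x := 1 + (ℓ + m : ℝ)) (by positivity)
    simp only [hg, Nat.cast_add, Nat.cast_one, ← add_assoc] at this ⊢
    exact this
  calc ∑ m ∈ range N, (1 + (ℓ + m : ℝ)) ^ (-(s + 1))
      ≤ ∑ m ∈ range (N + 1), (1 + (ℓ + m : ℝ)) ^ (-(s + 1)) :=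
        sum_le_sum_of_subset_of_nonneg (range_subset_range.2 N.le_succ)
          fun _ _ _ => by positivity
    _ = (1 + ℓ) ^ (-(s + 1)) + ∑ m ∈ range N, (1 + (ℓ + (m + 1 : ℕ) : ℝ)) ^ (-(s + 1)) := by
        rw [sum_range_succ', add_comm]
        simp
    _ ≤ (1 + ℓ) ^ (-s) + ∑ m ∈ range N, (g m - g (m + 1)) / s := by
        gcongr with m
        · exact le_add_of_nonneg_right ℓ.cast_nonneg
        · linarith
        · exact htail m
    _ = (1 + ℓ) ^ (-s) + (g 0 - g N) / s := by rw [← sum_div, sum_range_sub']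
    _ ≤ (1 + 1 / s) * (1 + ℓ) ^ (-s) := by
        have hgN : 0 ≤ g N := by positivity
        simp only [hg, Nat.cast_zero, add_zero]
        rw [add_mul, one_mul, one_div_mul_eq_div]
        gcongr
        linarith

theorem abs_le_of_abs_sub_le_rpow {f : ℕ → ℝ} {s C : ℝ} (hs : 0 < s)
    (hf : Tendsto f atTop (𝓝 0))
    (hdiff : ∀ ℓ : ℕ, |f (ℓ + 1) - f ℓ| ≤ C * (1 + ℓ) ^ (-(s + 1))) (ℓ : ℕ) :
    |f ℓ| ≤ C * (1 + 1 / s) * (1 + ℓ) ^ (-s) := by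
  have hC : 0 ≤ C := by simpa using (abs_nonneg _).trans (hdiff 0)
  set d : ℕ → ℝ := fun n => C * (1 + n) ^ (-(s + 1)) with hd
  have hd_nonneg : ∀ n, 0 ≤ d n := fun n => by positivity
  have hpartial : ∀ ℓ N, ∑ m ∈ range N, d (ℓ + m) ≤ C * (1 + 1 / s) * (1 + ℓ) ^ (-s) := by
    intro ℓ N
    simp only [hd, ← mul_sum, Nat.cast_add, mul_assoc]
    exact mul_le_mul_of_nonneg_left (sum_range_one_add_rpow_neg_le hs ℓ N) hC
  have hsummable : Summable d := summable_of_sum_range_le hd_nonneg (by simpa using hpartial 0)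
  calc |f ℓ| = dist (f ℓ) 0 := (Real.dist_0_eq_abs _).symm
    _ ≤ ∑' m, d (ℓ + m) := dist_le_tsum_of_dist_le_of_tendsto d
        (fun n => by rw [dist_comm, Real.dist_eq]; exact hdiff n) hsummable hf ℓ
    _ ≤ C * (1 + 1 / s) * (1 + ℓ) ^ (-s) :=
        Real.tsum_le_of_sum_range_le (fun _ => hd_nonneg _) (hpartial ℓ)

theorem tendsto_fwdDiffSeq {f : ℕ → ℝ} (hf : Tendsto f atTop (𝓝 0)) (i : ℕ) :
    Tendsto (fwdDiffSeq f i) atTop (𝓝 0) := by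
  induction i with
  | zero => exact hf
  | succ i ih =>
    show Tendsto (fun ℓ => fwdDiffSeq f i (ℓ + 1) - fwdDiffSeq f i ℓ) atTop (𝓝 0)
    simpa using (ih.comp (tendsto_add_atTop_nat 1)).sub ih

theorem fwdDiffSeq_decay_general (r : ℕ) (β c : ℝ) (hβ : 0 < β) (hc : 0 < c)
    (A : ℕ → ℝ)
    (hlim : Tendsto (fun ℓ => Real.sqrt (A ℓ)) atTop (nhds 0))
    (hr : ∀ ℓ : ℕ, |fwdDiffSeq (fun ℓ => Real.sqrt (A ℓ)) r ℓ| ≤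
      c * (1 + (ℓ : ℝ)) ^ (-(1 + β + (r : ℝ)))) :
    ∀ i ≤ r, ∃ C > 0, ∀ ℓ : ℕ,
      |fwdDiffSeq (fun ℓ => Real.sqrt (A ℓ)) i ℓ| ≤
        C * (1 + (ℓ : ℝ)) ^ (-(1 + β + (i : ℝ))) := by
  intro i hi
  induction hi using Nat.decreasingInduction with
  | self => exact ⟨c, hc, hr⟩
  | of_succ i _ ih =>
    obtain ⟨C, hC, hbound⟩ := ih
    have hs : 0 < 1 + β + i := by positivity
    refine ⟨C * (1 + 1 / (1 + β + i)), by positivity,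
      abs_le_of_abs_sub_le_rpow hs (tendsto_fwdDiffSeq hlim i) fun ℓ => ?_⟩
    have hexp : -(1 + β + ((i + 1 : ℕ) : ℝ)) = -(1 + β + i + 1) := by push_cast; ring
    exact hexp ▸ hbound ℓ

/-- Decay of lower-order forward differences of `√A_ℓ` from decay of the
`r`-th differences. -/
theorem fwdDiffSeq_decay (r : ℕ) (β c : ℝ) (hβ : 0 < β) (hc : 0 < c)
    (A : ℕ → ℝ) (hA : ∀ ℓ, 0 ≤ A ℓ)
    (hlim : Tendsto (fun ℓ => Real.sqrt (A ℓ)) atTop (nhds 0))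
    (hr : ∀ ℓ : ℕ, |fwdDiffSeq (fun ℓ => Real.sqrt (A ℓ)) r ℓ| ≤
      c * (1 + (ℓ : ℝ)) ^ (-(1 + β + (r : ℝ)))) :
    ∀ i ≤ r, ∃ C > 0, ∀ ℓ : ℕ,
      |fwdDiffSeq (fun ℓ => Real.sqrt (A ℓ)) i ℓ| ≤
        C * (1 + (ℓ : ℝ)) ^ (-(1 + β + (i : ℝ))) :=
  fwdDiffSeq_decay_general r β c hβ hc A hlim hr
end

section
/- For every ℓ ∈ ℕ and θ ∈ (0, π), the Legendre polynomial satisfies the Mehler–Dirichlet formula P_ℓ(cos θ) = (√2/π) ∫_θ^π sin((ℓ + 1/2)φ)/√(cos θ − cos φ) dφ. -/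
/-!
Write `M a = ∫_θ^π sin (a φ) / √(cos θ - cos φ) dφ`. Differentiating
`2 cos (a φ) √(cos θ - cos φ)`, which vanishes at `φ = θ` and, when `cos (a π) = 0`, at `φ = π`,
gives `(a + 1/2) M (a + 1) + (a - 1/2) M (a - 1) = 2 a cos θ M a`. At `a = n + 1/2` this is
Bonnet's recurrence `(n + 1) Pₙ₊₁ = (2n + 1) x Pₙ - n Pₙ₋₁`, which Rodrigues' formula gives for the
Legendre polynomials, so the two sides agree once they agree for `n = 0`. There
`√2 arccos (cos (φ/2) / cos (θ/2))` is an antiderivative of `sin (φ/2) / √(cos θ - cos φ) ≥ 0`, so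
`M (1/2) = π / √2`; this also makes the kernel integrable, since on `[θ, π]` every continuous
numerator is a continuous multiple of `sin (φ/2)`.
-/

open Real Set

/-- The `ℓ`-th Legendre polynomial via Rodrigues' formula. -/
noncomputable def legendreP (ℓ : ℕ) (x : ℝ) : ℝ :=
  ((2 : ℝ) ^ ℓ * (Nat.factorial ℓ : ℝ))⁻¹ *
    iteratedDeriv ℓ (fun t : ℝ => (t ^ 2 - 1) ^ ℓ) x

namespace Polynomial

variable {R : Type*} [CommRing R]

theorem iterate_derivative_mul_X_sq_sub_one (p : R[X]) (k : ℕ) :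
    derivative^[k] (p * (X ^ 2 - 1)) =
      derivative^[k] p * (X ^ 2 - 1) + (2 * k) • (derivative^[k - 1] p * X) +
        (k * (k - 1)) • derivative^[k - 2] p := by
  rw [show p * (X ^ 2 - 1) = p * X * X - p by ring, iterate_derivative_sub,
    iterate_derivative_mul_X, iterate_derivative_mul_X, iterate_derivative_mul_X, Nat.sub_sub]
  simp only [nsmul_eq_mul, Nat.cast_mul, Nat.cast_ofNat]
  ring

theorem derivative_X_sq_sub_one_pow_succ (n : ℕ) :
    derivative ((X ^ 2 - 1 : R[X]) ^ (n + 1)) = (2 * (n + 1)) • ((X ^ 2 - 1) ^ n * X) := by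
  rw [derivative_pow]
  simp only [derivative_sub, derivative_X_pow, derivative_one, nsmul_eq_mul, C_eq_natCast]
  push_cast
  ring

/-- `Dⁿ (X² - 1)ⁿ`, which is `2ⁿ n! Pₙ` by Rodrigues' formula. -/
noncomputable def rodrigues (n : ℕ) : R[X] := derivative^[n] ((X ^ 2 - 1) ^ n)

@[simp] theorem rodrigues_zero : rodrigues 0 = (1 : R[X]) := by simp [rodrigues]

theorem derivative_rodrigues (n : ℕ) :
    derivative (rodrigues n : R[X]) = derivative^[n + 1] ((X ^ 2 - 1) ^ n) :=
  (Function.iterate_succ_apply' _ _ _).symm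

theorem rodrigues_succ_eq_X_mul (n : ℕ) :
    (rodrigues (n + 1) : R[X]) =
      (2 * (n + 1)) • (rodrigues n * X + n • derivative^[n - 1] ((X ^ 2 - 1) ^ n)) := by
  rw [rodrigues, Function.iterate_succ_apply, derivative_X_sq_sub_one_pow_succ,
    iterate_derivative_smul, iterate_derivative_mul_X, rodrigues]

theorem rodrigues_succ_eq_X_sq_sub_one_mul (n : ℕ) :
    (rodrigues (n + 1) : R[X]) =
      derivative (rodrigues n) * (X ^ 2 - 1) + (2 * (n + 1)) • (rodrigues n * X) +
        ((n + 1) * n) • derivative^[n - 1] ((X ^ 2 - 1) ^ n) := by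
  rw [rodrigues, pow_succ, iterate_derivative_mul_X_sq_sub_one, derivative_rodrigues]
  simp [rodrigues]

theorem rodrigues_succ (n : ℕ) :
    (rodrigues (n + 1) : R[X]) =
      2 * ((n : R[X]) + 1) * X * rodrigues n + 2 * (X ^ 2 - 1) * derivative (rodrigues n) := by
  have h₁ := rodrigues_succ_eq_X_mul (R := R) n
  have h₂ := rodrigues_succ_eq_X_sq_sub_one_mul (R := R) n
  simp only [nsmul_eq_mul, smul_add] at h₁ h₂
  push_cast at h₁ h₂
  linear_combination 2 * h₂ - h₁

theorem derivative_rodrigues_succ (n : ℕ) :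
    derivative (rodrigues (n + 1) : R[X]) =
      2 * ((n : R[X]) + 1) * (X * derivative (rodrigues n) + ((n : R[X]) + 1) * rodrigues n) := by
  rw [derivative_rodrigues, Function.iterate_succ_apply, derivative_X_sq_sub_one_pow_succ,
    iterate_derivative_smul, iterate_derivative_mul_X, derivative_rodrigues, Nat.add_sub_cancel,
    rodrigues]
  simp only [nsmul_eq_mul]
  push_cast
  ring

theorem X_sq_sub_one_mul_derivative_rodrigues_succ (n : ℕ) :
    (X ^ 2 - 1) * derivative (rodrigues (n + 1) : R[X]) =
      ((n : R[X]) + 1) * X * rodrigues (n + 1) - 2 * ((n : R[X]) + 1) ^ 2 * rodrigues n := by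
  linear_combination (X ^ 2 - 1) * derivative_rodrigues_succ (R := R) n -
    ((n : R[X]) + 1) * X * rodrigues_succ (R := R) n

theorem rodrigues_add_two (n : ℕ) :
    (rodrigues (n + 2) : R[X]) =
      2 * (2 * (n : R[X]) + 3) * X * rodrigues (n + 1) -
        4 * ((n : R[X]) + 1) ^ 2 * rodrigues n := by
  have h := rodrigues_succ (R := R) (n + 1)
  push_cast at h
  linear_combination h + 2 * X_sq_sub_one_mul_derivative_rodrigues_succ (R := R) n

protected theorem iteratedDeriv {𝕜 : Type*} [NontriviallyNormedField 𝕜] (p : 𝕜[X]) (n : ℕ) :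
    iteratedDeriv n (fun x => p.eval x) = fun x => (derivative^[n] p).eval x := by
  induction n with
  | zero => simp
  | succ n ih =>
    ext x
    rw [iteratedDeriv_succ, ih, Function.iterate_succ_apply', Polynomial.deriv]

end Polynomial

open Polynomial MeasureTheory intervalIntegral

theorem legendreP_eq_eval_rodrigues (n : ℕ) (x : ℝ) :
    legendreP n x = ((2 : ℝ) ^ n * n.factorial)⁻¹ * (rodrigues n : ℝ[X]).eval x := by
  have h : (fun t : ℝ => (t ^ 2 - 1) ^ n) = fun t => ((X ^ 2 - 1 : ℝ[X]) ^ n).eval t := by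
    simp
  rw [legendreP, h, Polynomial.iteratedDeriv, rodrigues]

theorem legendreP_zero (x : ℝ) : legendreP 0 x = 1 := by
  simp [legendreP_eq_eval_rodrigues]

theorem legendreP_one (x : ℝ) : legendreP 1 x = x := by
  simp [legendreP_eq_eval_rodrigues, rodrigues_succ]

theorem legendreP_add_two (n : ℕ) (x : ℝ) :
    (n + 2) * legendreP (n + 2) x =
      (2 * n + 3) * x * legendreP (n + 1) x - (n + 1) * legendreP n x := by
  simp only [legendreP_eq_eval_rodrigues, rodrigues_add_two, Nat.factorial_succ, eval_sub,
    eval_mul, eval_ofNat, eval_add, eval_natCast, eval_X, eval_pow, eval_one]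
  push_cast
  field_simp
  ring

noncomputable def mehlerIntegral (θ a : ℝ) : ℝ :=
  ∫ φ in θ..π, sin (a * φ) / √(cos θ - cos φ)

section
variable {θ : ℝ}

theorem cos_sub_cos_pos (hθ : 0 ≤ θ) {φ : ℝ} (hφ : φ ∈ Ioc θ π) : 0 < cos θ - cos φ :=
  sub_pos.2 (cos_lt_cos_of_nonneg_of_le_pi hθ hφ.2 hφ.1)

theorem hasDerivAt_arccos_cos_half_div (hθ : θ ∈ Ioo 0 π) {φ : ℝ} (hφ : φ ∈ Ioo θ π) :
    HasDerivAt (fun t => √2 * arccos (cos (t / 2) / cos (θ / 2)))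
      (sin (φ / 2) / √(cos θ - cos φ)) φ := by
  obtain ⟨hθ₀, hθπ⟩ := hθ
  obtain ⟨hφθ, hφπ⟩ := hφ
  have hcθ : 0 < cos (θ / 2) := cos_pos_of_mem_Ioo ⟨by linarith, by linarith⟩
  have hcφ : 0 < cos (φ / 2) := cos_pos_of_mem_Ioo ⟨by linarith, by linarith⟩
  have hlt : cos (φ / 2) < cos (θ / 2) :=
    cos_lt_cos_of_nonneg_of_le_pi (by linarith) (by linarith) (by linarith)
  have hg := cos_sub_cos_pos hθ₀.le ⟨hφθ, hφπ.le⟩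
  have hinner : HasDerivAt (fun t => cos (t / 2) / cos (θ / 2))
      (-sin (φ / 2) * (1 / 2) / cos (θ / 2)) φ :=
    ((hasDerivAt_cos _).comp φ ((hasDerivAt_id φ).div_const 2)).div_const _
  refine (((hasDerivAt_arccos (by linarith [div_pos hcφ hcθ])
    ((div_lt_one hcθ).2 hlt).ne).comp φ hinner).const_mul √2).congr_deriv ?_
  have hsqrt : √(1 - (cos (φ / 2) / cos (θ / 2)) ^ 2) = √(cos θ - cos φ) / (√2 * cos (θ / 2)) := by
    have h : 1 - (cos (φ / 2) / cos (θ / 2)) ^ 2 = (cos θ - cos φ) / (√2 * cos (θ / 2)) ^ 2 := by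
      have hθ₂ : cos (θ / 2) ^ 2 = 1 / 2 + cos θ / 2 := by
        rw [cos_sq, mul_div_cancel₀ _ two_ne_zero]
      have hφ₂ : cos (φ / 2) ^ 2 = 1 / 2 + cos φ / 2 := by
        rw [cos_sq, mul_div_cancel₀ _ two_ne_zero]
      rw [mul_pow, sq_sqrt zero_le_two, div_pow]
      field_simp
      linear_combination 2 * hθ₂ - 2 * hφ₂
    rw [h, sqrt_div hg.le, sqrt_sq (by positivity)]
  rw [hsqrt]
  have h2 : √2 * √2 = 2 := mul_self_sqrt zero_le_two
  field_simp
  linear_combination sin (φ / 2) * h2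

theorem intervalIntegrable_sin_half_div_sqrt (hθ : θ ∈ Ioo 0 π) :
    IntervalIntegrable (fun φ => sin (φ / 2) / √(cos θ - cos φ)) volume θ π := by
  refine (intervalIntegrable_iff_integrableOn_Ioc_of_le hθ.2.le).2 <|
    integrableOn_deriv_of_nonneg (by fun_prop) (fun φ hφ => hasDerivAt_arccos_cos_half_div hθ hφ)
      fun φ hφ => div_nonneg (sin_nonneg_of_nonneg_of_le_pi ?_ ?_) (sqrt_nonneg _)
  all_goals linarith [hθ.1, hφ.1, hφ.2, pi_pos]

theorem intervalIntegrable_div_sqrt_cos_sub_cos (hθ : θ ∈ Ioo 0 π) {f : ℝ → ℝ}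
    (hf : ContinuousOn f (Icc θ π)) :
    IntervalIntegrable (fun φ => f φ / √(cos θ - cos φ)) volume θ π := by
  have hsin : ∀ φ ∈ Icc θ π, sin (φ / 2) ≠ 0 := fun φ hφ =>
    (sin_pos_of_pos_of_lt_pi (by linarith [hθ.1, hφ.1]) (by linarith [hφ.2, pi_pos])).ne'
  rw [← uIcc_of_le hθ.2.le] at hf hsin
  refine ((intervalIntegrable_sin_half_div_sqrt hθ).continuousOn_mul
    (g := fun φ => f φ / sin (φ / 2)) (hf.div (by fun_prop) hsin)).congr fun φ hφ => ?_
  field_simp [hsin φ (uIoc_subset_uIcc hφ)]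

theorem mehlerIntegral_half (hθ : θ ∈ Ioo 0 π) : mehlerIntegral θ (1 / 2) = π / √2 := by
  have hcθ : cos (θ / 2) ≠ 0 :=
    (cos_pos_of_mem_Ioo ⟨by linarith [hθ.1, pi_pos], by linarith [hθ.2]⟩).ne'
  have h := integral_eq_sub_of_hasDerivAt_of_le hθ.2.le (by fun_prop)
    (fun φ hφ => hasDerivAt_arccos_cos_half_div hθ hφ) (intervalIntegrable_sin_half_div_sqrt hθ)
  simp only [mehlerIntegral, one_div_mul_eq_div, h, cos_pi_div_two, zero_div, arccos_zero,
    div_self hcθ, arccos_one, mul_zero, sub_zero]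
  field_simp
  rw [sq_sqrt zero_le_two]

theorem hasDerivAt_cos_mul_mul_sqrt (a : ℝ) {φ : ℝ} (hφ : 0 < cos θ - cos φ) :
    HasDerivAt (fun t => 2 * cos (a * t) * √(cos θ - cos t))
      ((a + 1 / 2) * (sin ((a + 1) * φ) / √(cos θ - cos φ))
        + (a - 1 / 2) * (sin ((a - 1) * φ) / √(cos θ - cos φ))
        - 2 * a * cos θ * (sin (a * φ) / √(cos θ - cos φ))) φ := by
  have hcos : HasDerivAt (fun t => 2 * cos (a * t)) (2 * (-sin (a * φ) * a)) φ := by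
    simpa using ((hasDerivAt_cos _).comp φ ((hasDerivAt_id φ).const_mul a)).const_mul 2
  have hsqrt : HasDerivAt (fun t => √(cos θ - cos t)) (sin φ / (2 * √(cos θ - cos φ))) φ := by
    simpa using ((hasDerivAt_cos φ).const_sub (cos θ)).sqrt hφ.ne'
  refine (hcos.mul hsqrt).congr_deriv ?_
  have hs : √(cos θ - cos φ) ^ 2 = cos θ - cos φ := sq_sqrt hφ.le
  have hs₀ : √(cos θ - cos φ) ≠ 0 := (sqrt_pos.2 hφ).ne'
  rw [show (a + 1) * φ = a * φ + φ by ring, show (a - 1) * φ = a * φ - φ by ring, sin_add,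
    sin_sub]
  field_simp
  linear_combination -4 * a * sin (a * φ) * hs

theorem mehlerIntegral_recurrence (hθ : θ ∈ Ioo 0 π) {a : ℝ} (ha : cos (a * π) = 0) :
    (a + 1 / 2) * mehlerIntegral θ (a + 1) + (a - 1 / 2) * mehlerIntegral θ (a - 1) =
      2 * a * cos θ * mehlerIntegral θ a := by
  have hint : ∀ b c : ℝ,
      IntervalIntegrable (fun φ => c * (sin (b * φ) / √(cos θ - cos φ))) volume θ π :=
    fun b c => (intervalIntegrable_div_sqrt_cos_sub_cos hθ (by fun_prop)).const_mul c
  have h := integral_eq_sub_of_hasDerivAt_of_le hθ.2.le (by fun_prop)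
    (fun φ hφ => hasDerivAt_cos_mul_mul_sqrt a (cos_sub_cos_pos hθ.1.le (Ioo_subset_Ioc_self hφ)))
    (((hint _ _).add (hint _ _)).sub (hint _ _))
  rw [integral_sub ((hint _ _).add (hint _ _)) (hint _ _), integral_add (hint _ _) (hint _ _),
    intervalIntegral.integral_const_mul, intervalIntegral.integral_const_mul,
    intervalIntegral.integral_const_mul, ha, sub_self] at h
  simp only [mehlerIntegral]
  linear_combination h

theorem cos_nat_add_half_mul_pi (n : ℕ) : cos ((n + 1 / 2) * π) = 0 :=
  cos_eq_zero_iff.2 ⟨n, by push_cast; ring⟩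

theorem mehlerIntegral_add_two (hθ : θ ∈ Ioo 0 π) (n : ℕ) :
    ((n : ℝ) + 2) * mehlerIntegral θ ((n + 2 : ℕ) + 1 / 2) =
      (2 * n + 3) * cos θ * mehlerIntegral θ ((n + 1 : ℕ) + 1 / 2) -
        (n + 1) * mehlerIntegral θ (n + 1 / 2) := by
  have h := mehlerIntegral_recurrence hθ (cos_nat_add_half_mul_pi (n + 1))
  push_cast at h ⊢
  rw [show (n : ℝ) + 1 + 1 / 2 + 1 = n + 2 + 1 / 2 by ring,
    show (n : ℝ) + 1 + 1 / 2 - 1 = n + 1 / 2 by ring] at h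
  linear_combination h

theorem mehlerIntegral_three_halves (hθ : θ ∈ Ioo 0 π) :
    mehlerIntegral θ (3 / 2) = cos θ * mehlerIntegral θ (1 / 2) := by
  have h := mehlerIntegral_recurrence hθ (a := 1 / 2) (by simpa using cos_nat_add_half_mul_pi 0)
  norm_num at h
  linear_combination h

end

/-- The Mehler–Dirichlet formula for Legendre polynomials. -/
theorem mehler_dirichlet (ℓ : ℕ) (θ : ℝ) (hθ : θ ∈ Set.Ioo 0 π) :
    legendreP ℓ (Real.cos θ) =
      (Real.sqrt 2 / π) *
        ∫ φ in θ..π,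
          Real.sin (((ℓ : ℝ) + 1 / 2) * φ) / Real.sqrt (Real.cos θ - Real.cos φ) := by
  change legendreP ℓ (cos θ) = √2 / π * mehlerIntegral θ (ℓ + 1 / 2)
  induction ℓ using Nat.twoStepInduction with
  | zero =>
    rw [legendreP_zero, Nat.cast_zero, zero_add, mehlerIntegral_half hθ]
    field_simp
  | one =>
    rw [legendreP_one, show ((1 : ℕ) : ℝ) + 1 / 2 = 3 / 2 by norm_num,
      mehlerIntegral_three_halves hθ, mehlerIntegral_half hθ]
    field_simp
  | more n ih₀ ih₁ =>
    apply mul_left_cancel₀ (by positivity : (n : ℝ) + 2 ≠ 0)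
    rw [legendreP_add_two, ih₀, ih₁]
    linear_combination -(√2 / π) * mehlerIntegral_add_two hθ n
end
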